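/- Let Ω ⊂ ℝ^d bounded measurable, α > 0, ρ ≥ 0 integrable with mass M, second moment Φ, and I_α = ∫_Ω ∫_Ω |x−y|^{−α} ρ(x) ρ(y) dx dy. Then 2^{−α/2} M^{α/2 + 2} Φ^{−α/2} ≤ I_α, provided Φ > 0. -/

import Mathlib

open MeasureTheory ENNReal

/-- `2^{-α/2} M^{α/2+2} Φ^{-α/2} ≤ I_α` for a nonnegative density `ρ` with
mass `M` and positive second moment `Φ`. -/
theorem stmt7 {d : ℕ} (Ω : Set (EuclideanSpace ℝ (Fin d)))
    (hΩmeas : MeasurableSet Ω) (hΩbdd : Bornology.IsBounded Ω)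
    (α : ℝ) (hα : 0 < α)
    (ρ : EuclideanSpace ℝ (Fin d) → ℝ) (hρ : ∀ x, 0 ≤ ρ x)
    (hρmeas : Measurable ρ)
    (hρint : IntegrableOn ρ Ω)
    (hρ2 : IntegrableOn (fun x => ‖x‖ ^ 2 * ρ x) Ω)
    (M Φ : ℝ)
    (hM : M = ∫ x in Ω, ρ x)
    (hΦ : Φ = ∫ x in Ω, ‖x‖ ^ 2 * ρ x)
    (hΦpos : 0 < Φ)
    (Iα : ℝ≥0∞)
    (hI : Iα = ∫⁻ x in Ω, ∫⁻ y in Ω,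
        ENNReal.ofReal (ρ x * ρ y) * (ENNReal.ofReal ‖x - y‖) ^ (-α)) :
    ENNReal.ofReal ((2 : ℝ) ^ (-α / 2) * M ^ (α / 2 + 2) * Φ ^ (-α / 2)) ≤ Iα := by
  -- dimension is positive, else Φ = 0
  rcases eq_or_ne d 0 with hd | hd
  · exfalso
    subst hd
    have : Φ = 0 := by
      rw [hΦ]
      have h0 : ∀ x : EuclideanSpace ℝ (Fin 0), ‖x‖ ^ 2 * ρ x = 0 := by
        intro x
        have : x = 0 := Subsingleton.elim x 0
        simp [this]
      simp [h0]
    linarith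
  haveI : NeZero d := ⟨hd⟩
  -- trivial case M = 0
  have hM0 : 0 ≤ M := by
    rw [hM]; exact setIntegral_nonneg hΩmeas fun x _ => hρ x
  rcases eq_or_lt_of_le hM0 with hMz | hMpos
  · have : M ^ (α / 2 + 2) = 0 := by
      rw [← hMz]; exact Real.zero_rpow (by positivity)
    simp [this]
  set μ : Measure (EuclideanSpace ℝ (Fin d)) := volume.restrict Ω with hμ
  set ν : Measure (EuclideanSpace ℝ (Fin d) × EuclideanSpace ℝ (Fin d)) := μ.prod μ with hν
  -- case Iα = ∞
  rcases eq_or_ne Iα ⊤ with hItop | hItop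
  · rw [hItop]; exact le_top
  -- the vector-valued density
  set w : EuclideanSpace ℝ (Fin d) → EuclideanSpace ℝ (Fin d) := fun x => ρ x • x with hw
  have hwmeas : Measurable w := by fun_prop
  have hwint : Integrable w μ := by
    refine Integrable.mono' (hρint.add hρ2) hwmeas.aestronglyMeasurable ?_
    filter_upwards with x
    have h1 : ‖w x‖ = ρ x * ‖x‖ := by
      rw [hw]; rw [norm_smul, Real.norm_eq_abs, abs_of_nonneg (hρ x)]
    rw [h1]
    have : (ρ + fun x => ‖x‖ ^ 2 * ρ x) x = ρ x + ‖x‖ ^ 2 * ρ x := rfl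
    rw [this]
    nlinarith [hρ x, norm_nonneg x, sq_nonneg (‖x‖ - 1)]
  -- integrabilities on the product
  have hP1 : Integrable (fun z : EuclideanSpace ℝ (Fin d) × EuclideanSpace ℝ (Fin d) =>
      (‖z.1‖ ^ 2 * ρ z.1) * ρ z.2) ν := hρ2.mul_prod hρint
  have hP2 : Integrable (fun z : EuclideanSpace ℝ (Fin d) × EuclideanSpace ℝ (Fin d) =>
      ρ z.1 * (‖z.2‖ ^ 2 * ρ z.2)) ν := hρint.mul_prod hρ2
  have hP3meas : Measurable (fun z : EuclideanSpace ℝ (Fin d) × EuclideanSpace ℝ (Fin d) =>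
      inner ℝ (w z.1) (w z.2)) :=
    (hwmeas.comp measurable_fst).inner (hwmeas.comp measurable_snd)
  have hP3 : Integrable (fun z : EuclideanSpace ℝ (Fin d) × EuclideanSpace ℝ (Fin d) =>
      inner ℝ (w z.1) (w z.2)) ν := by
    refine Integrable.mono' (hwint.norm.mul_prod hwint.norm)
      hP3meas.aestronglyMeasurable ?_
    filter_upwards with z
    exact abs_real_inner_le_norm _ _
  have hP3val : 0 ≤ ∫ z, inner ℝ (w z.1) (w z.2) ∂ν := by
    rw [hν, integral_prod _ hP3]
    have e1 : ∀ x : EuclideanSpace ℝ (Fin d),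
        ∫ y, inner ℝ (w x) (w y) ∂μ = inner ℝ (w x) (∫ y, w y ∂μ) :=
      fun x => integral_inner hwint (w x)
    simp_rw [e1]
    have e2 : ∀ x : EuclideanSpace ℝ (Fin d),
        inner ℝ (w x) (∫ y, w y ∂μ) = inner ℝ (∫ y, w y ∂μ) (w x) :=
      fun x => real_inner_comm _ _
    simp_rw [e2]
    rw [integral_inner hwint]
    exact real_inner_self_nonneg
  -- the second-moment product function
  set F : EuclideanSpace ℝ (Fin d) × EuclideanSpace ℝ (Fin d) → ℝ :=
    fun z => ρ z.1 * ρ z.2 * ‖z.1 - z.2‖ ^ 2 with hF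
  have hFmeas : Measurable F := by fun_prop
  have hFnonneg : ∀ z, 0 ≤ F z := fun z =>
    mul_nonneg (mul_nonneg (hρ _) (hρ _)) (sq_nonneg _)
  have hFeq : ∀ z : EuclideanSpace ℝ (Fin d) × EuclideanSpace ℝ (Fin d),
      F z = (‖z.1‖ ^ 2 * ρ z.1) * ρ z.2
      + ρ z.1 * (‖z.2‖ ^ 2 * ρ z.2) - 2 * inner ℝ (w z.1) (w z.2) := by
    intro z
    have hns : ‖z.1 - z.2‖ ^ 2 = ‖z.1‖ ^ 2 - 2 * inner ℝ z.1 z.2 + ‖z.2‖ ^ 2 :=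
      norm_sub_sq_real z.1 z.2
    have hin : inner ℝ (w z.1) (w z.2) = ρ z.1 * ρ z.2 * inner ℝ z.1 z.2 := by
      rw [hw]; rw [real_inner_smul_left, real_inner_smul_right]; ring
    rw [hF]; simp only []
    rw [hns, hin]; ring
  have hFint : Integrable F ν := by
    have e : F = fun z => (‖z.1‖ ^ 2 * ρ z.1) * ρ z.2
        + ρ z.1 * (‖z.2‖ ^ 2 * ρ z.2) - 2 * inner ℝ (w z.1) (w z.2) := funext hFeq
    rw [e]
    exact (hP1.add hP2).sub (hP3.const_mul 2)
  have hFle : ∫ z, F z ∂ν ≤ 2 * M * Φ := by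
    have h1 : ∫ z, F z ∂ν = Φ * M + M * Φ - 2 * ∫ z, inner ℝ (w z.1) (w z.2) ∂ν := by
      calc ∫ z, F z ∂ν
          = ∫ z, ((‖z.1‖ ^ 2 * ρ z.1) * ρ z.2
            + ρ z.1 * (‖z.2‖ ^ 2 * ρ z.2) - 2 * inner ℝ (w z.1) (w z.2)) ∂ν := by
            exact integral_congr_ae (Filter.Eventually.of_forall hFeq)
        _ = (∫ z, ((‖z.1‖ ^ 2 * ρ z.1) * ρ z.2
            + ρ z.1 * (‖z.2‖ ^ 2 * ρ z.2)) ∂ν) - ∫ z, 2 * inner ℝ (w z.1) (w z.2) ∂ν :=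
            integral_sub (hP1.add hP2) (hP3.const_mul 2)
        _ = (∫ z, (‖z.1‖ ^ 2 * ρ z.1) * ρ z.2 ∂ν)
            + (∫ z, ρ z.1 * (‖z.2‖ ^ 2 * ρ z.2) ∂ν)
            - 2 * ∫ z, inner ℝ (w z.1) (w z.2) ∂ν := by
            rw [integral_add hP1 hP2, integral_const_mul]
        _ = Φ * M + M * Φ - 2 * ∫ z, inner ℝ (w z.1) (w z.2) ∂ν := by
            have e1 := integral_prod_mul (μ := μ) (ν := μ) (fun x => ‖x‖ ^ 2 * ρ x) ρ
            have e2 := integral_prod_mul (μ := μ) (ν := μ) ρ (fun x => ‖x‖ ^ 2 * ρ x)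
            rw [hν, e1, e2, ← hM, ← hΦ]
    rw [h1]; nlinarith
  -- ENNReal setup
  set t : EuclideanSpace ℝ (Fin d) × EuclideanSpace ℝ (Fin d) → ℝ≥0∞ :=
    fun z => ENNReal.ofReal ‖z.1 - z.2‖ with htdef
  have htmeas : Measurable t := (measurable_fst.sub measurable_snd).norm.ennreal_ofReal
  set f : EuclideanSpace ℝ (Fin d) × EuclideanSpace ℝ (Fin d) → ℝ≥0∞ :=
    fun z => ENNReal.ofReal (ρ z.1) * ENNReal.ofReal (ρ z.2) with hfdef
  have hfmeas : Measurable f :=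
    ((hρmeas.comp measurable_fst).ennreal_ofReal).mul ((hρmeas.comp measurable_snd).ennreal_ofReal)
  set g : EuclideanSpace ℝ (Fin d) × EuclideanSpace ℝ (Fin d) → ℝ≥0∞ :=
    fun z => t z ^ (-α) with hgdef
  have hgmeas : Measurable g := htmeas.pow measurable_const
  set h : EuclideanSpace ℝ (Fin d) × EuclideanSpace ℝ (Fin d) → ℝ≥0∞ :=
    fun z => t z ^ (2:ℝ) with hhdef
  have hhmeas : Measurable h := htmeas.pow measurable_const
  set p : ℝ := (α + 2) / 2 with hp
  set q : ℝ := (α + 2) / α with hq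
  have hpq : p.HolderConjugate q := by
    rw [Real.holderConjugate_iff]
    constructor
    · rw [hp, lt_div_iff₀ (by norm_num)]; linarith
    · rw [hp, hq]; field_simp; ring
  have hppos : 0 < p := by rw [hp]; positivity
  have hqpos : 0 < q := by rw [hq]; positivity
  -- diagonal is null
  have hdiag : ∀ᵐ z : EuclideanSpace ℝ (Fin d) × EuclideanSpace ℝ (Fin d) ∂ν, z.1 ≠ z.2 := by
    have hDmeas : MeasurableSet {z : EuclideanSpace ℝ (Fin d) × EuclideanSpace ℝ (Fin d) | z.1 = z.2} :=
      measurableSet_eq_fun measurable_fst measurable_snd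
    rw [Filter.eventually_iff, mem_ae_iff]
    rw [show {z : EuclideanSpace ℝ (Fin d) × EuclideanSpace ℝ (Fin d) | z.1 ≠ z.2}ᶜ
        = {z : EuclideanSpace ℝ (Fin d) × EuclideanSpace ℝ (Fin d) | z.1 = z.2} by
      ext z; simp]
    rw [hν, Measure.prod_apply hDmeas]
    have hsl : ∀ x : EuclideanSpace ℝ (Fin d),
        μ (Prod.mk x ⁻¹' {z : EuclideanSpace ℝ (Fin d) × EuclideanSpace ℝ (Fin d) | z.1 = z.2}) = 0 := by
      intro x
      have : Prod.mk x ⁻¹' {z : EuclideanSpace ℝ (Fin d) × EuclideanSpace ℝ (Fin d) | z.1 = z.2}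
          = {x} := by ext y; simp [eq_comm]
      rw [this, hμ]
      exact le_antisymm ((Measure.restrict_apply_le _ _).trans_eq (measure_singleton x)) zero_le
    simp [hsl]
  -- Hölder
  set u : EuclideanSpace ℝ (Fin d) × EuclideanSpace ℝ (Fin d) → ℝ≥0∞ :=
    fun z => (f z * g z) ^ (1 / p) with hu
  set v : EuclideanSpace ℝ (Fin d) × EuclideanSpace ℝ (Fin d) → ℝ≥0∞ :=
    fun z => (f z * h z) ^ (1 / q) with hv
  have holder := ENNReal.lintegral_mul_le_Lp_mul_Lq ν hpq
    (f := u) (g := v)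
    ((hfmeas.mul hgmeas).pow measurable_const).aemeasurable
    ((hfmeas.mul hhmeas).pow measurable_const).aemeasurable
  -- pointwise : f ≤ u * v a.e.
  have hfuv : ∀ᵐ z ∂ν, f z ≤ u z * v z := by
    filter_upwards [hdiag] with z hz
    rcases eq_or_ne (f z) 0 with hfz | hfz
    · rw [hfz]; exact zero_le
    have htz : t z ≠ 0 := by
      rw [htdef]
      simp only [ne_eq, ENNReal.ofReal_eq_zero, not_le]
      rw [norm_pos_iff]
      exact sub_ne_zero_of_ne hz
    have httop : t z ≠ ⊤ := ENNReal.ofReal_ne_top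
    have hftop : f z ≠ ⊤ := by
      rw [hfdef]; exact ENNReal.mul_ne_top ENNReal.ofReal_ne_top ENNReal.ofReal_ne_top
    have huv : u z * v z = f z := by
      rw [hu, hv]
      simp only []
      rw [ENNReal.mul_rpow_of_nonneg _ _ (by positivity : (0:ℝ) ≤ 1/p),
          ENNReal.mul_rpow_of_nonneg _ _ (by positivity : (0:ℝ) ≤ 1/q)]
      rw [hgdef, hhdef]
      simp only []
      rw [← ENNReal.rpow_mul, ← ENNReal.rpow_mul]
      calc f z ^ (1/p) * t z ^ (-α * (1/p)) * (f z ^ (1/q) * t z ^ (2 * (1/q)))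
          = (f z ^ (1/p) * f z ^ (1/q)) * (t z ^ (-α * (1/p)) * t z ^ (2 * (1/q))) := by ring
        _ = f z ^ (1/p + 1/q) * t z ^ (-α * (1/p) + 2 * (1/q)) := by
            rw [← ENNReal.rpow_add _ _ hfz hftop, ← ENNReal.rpow_add _ _ htz httop]
        _ = f z := by
            have e1 : 1/p + 1/q = 1 := by rw [one_div, one_div]; exact hpq.inv_add_inv_eq_one
            have e2 : -α * (1/p) + 2 * (1/q) = 0 := by
              rw [hp, hq]; field_simp; ring
            rw [e1, e2, ENNReal.rpow_one, ENNReal.rpow_zero, mul_one]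
    rw [huv]
  -- the three integrals
  have hMint : ENNReal.ofReal M * ENNReal.ofReal M = ∫⁻ z, f z ∂ν := by
    have e := lintegral_prod_mul (μ := μ) (ν := μ)
      (f := fun x => ENNReal.ofReal (ρ x)) (g := fun x => ENNReal.ofReal (ρ x))
      hρmeas.ennreal_ofReal.aemeasurable hρmeas.ennreal_ofReal.aemeasurable
    rw [hν, hfdef]
    rw [e]
    rw [← ofReal_integral_eq_lintegral_ofReal hρint (Filter.Eventually.of_forall hρ), ← hM]
  have hIeq : ∫⁻ z, f z * g z ∂ν = Iα := by
    rw [hI, hν, lintegral_prod (fun z => f z * g z) ((hfmeas.mul hgmeas).aemeasurable)]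
    apply lintegral_congr
    intro x
    apply lintegral_congr
    intro y
    simp only [hfdef, hgdef, htdef]
    rw [ENNReal.ofReal_mul (hρ x)]
  have hDstep : ∫⁻ z, f z * h z ∂ν ≤ ENNReal.ofReal (2 * M * Φ) := by
    have hfh : ∀ z, f z * h z = ENNReal.ofReal (F z) := by
      intro z
      rw [hF]
      simp only []
      rw [ENNReal.ofReal_mul (mul_nonneg (hρ _) (hρ _)), ENNReal.ofReal_mul (hρ _)]
      rw [hfdef, hhdef, htdef]
      simp only []
      rw [ENNReal.ofReal_rpow_of_nonneg (norm_nonneg _) (by norm_num : (0:ℝ) ≤ 2)]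
      rw [show ‖z.1 - z.2‖ ^ (2:ℝ) = ‖z.1 - z.2‖ ^ (2:ℕ) by
        rw [show (2:ℝ) = ((2:ℕ):ℝ) by norm_num, Real.rpow_natCast]]
    simp_rw [hfh]
    rw [← ofReal_integral_eq_lintegral_ofReal hFint (Filter.Eventually.of_forall hFnonneg)]
    exact ENNReal.ofReal_le_ofReal hFle
  -- combine Hölder with the identifications
  have hup : ∀ z, u z ^ p = f z * g z := by
    intro z
    rw [hu]
    simp only []
    rw [← ENNReal.rpow_mul, one_div, inv_mul_cancel₀ hppos.ne', ENNReal.rpow_one]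
  have hvq : ∀ z, v z ^ q = f z * h z := by
    intro z
    rw [hv]
    simp only []
    rw [← ENNReal.rpow_mul, one_div, inv_mul_cancel₀ hqpos.ne', ENNReal.rpow_one]
  have key : ENNReal.ofReal M * ENNReal.ofReal M
      ≤ Iα ^ (1/p) * ENNReal.ofReal (2 * M * Φ) ^ (1/q) := by
    calc ENNReal.ofReal M * ENNReal.ofReal M = ∫⁻ z, f z ∂ν := hMint
      _ ≤ ∫⁻ z, u z * v z ∂ν := lintegral_mono_ae hfuv
      _ ≤ (∫⁻ z, u z ^ p ∂ν) ^ (1/p) * (∫⁻ z, v z ^ q ∂ν) ^ (1/q) := holder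
      _ = Iα ^ (1/p) * (∫⁻ z, f z * h z ∂ν) ^ (1/q) := by
          simp_rw [hup, hvq, hIeq]
      _ ≤ Iα ^ (1/p) * ENNReal.ofReal (2 * M * Φ) ^ (1/q) := by
          exact mul_le_mul_right (ENNReal.rpow_le_rpow hDstep (by positivity)) _
  -- final algebra
  set a : ℝ≥0∞ := ENNReal.ofReal M with ha
  set b : ℝ≥0∞ := ENNReal.ofReal Φ with hb
  set c : ℝ≥0∞ := ENNReal.ofReal (2 * M * Φ) with hc
  have ha0 : a ≠ 0 := (ENNReal.ofReal_pos.mpr hMpos).ne'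
  have hatop : a ≠ ⊤ := ENNReal.ofReal_ne_top
  have hb0 : b ≠ 0 := (ENNReal.ofReal_pos.mpr hΦpos).ne'
  have hbtop : b ≠ ⊤ := ENNReal.ofReal_ne_top
  have h20 : (ENNReal.ofReal 2 : ℝ≥0∞) ≠ 0 := (ENNReal.ofReal_pos.mpr (by norm_num)).ne'
  have h2top : (ENNReal.ofReal 2 : ℝ≥0∞) ≠ ⊤ := ENNReal.ofReal_ne_top
  have key2 : a ^ (α + 2) ≤ Iα * c ^ (α / 2) := by
    have k := ENNReal.rpow_le_rpow key hppos.le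
    calc a ^ (α + 2) = ((a * a) ^ p : ℝ≥0∞) := by
          rw [ENNReal.mul_rpow_of_nonneg _ _ hppos.le, ← ENNReal.rpow_add _ _ ha0 hatop]
          congr 1
          rw [hp]; ring
      _ ≤ (Iα ^ (1/p) * c ^ (1/q)) ^ p := k
      _ = Iα * c ^ (α / 2) := by
          rw [ENNReal.mul_rpow_of_nonneg _ _ hppos.le, ← ENNReal.rpow_mul, ← ENNReal.rpow_mul]
          rw [show 1/p * p = 1 by field_simp, show 1/q * p = α/2 by rw [hp, hq]; field_simp]
          rw [ENNReal.rpow_one]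
  have hcdec : c = ENNReal.ofReal 2 * a * b := by
    rw [hc, ha, hb, ENNReal.ofReal_mul (by nlinarith [hM0] : (0:ℝ) ≤ 2 * M),
      ENNReal.ofReal_mul (by norm_num : (0:ℝ) ≤ 2)]
  have hck : c ^ (α/2) = ENNReal.ofReal 2 ^ (α/2) * a ^ (α/2) * b ^ (α/2) := by
    rw [hcdec, ENNReal.mul_rpow_of_nonneg _ _ (by positivity : (0:ℝ) ≤ α/2),
      ENNReal.mul_rpow_of_nonneg _ _ (by positivity : (0:ℝ) ≤ α/2)]
  have hcne0 : c ≠ 0 := by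
    rw [hc]
    exact (ENNReal.ofReal_pos.mpr (by positivity : (0:ℝ) < 2 * M * Φ)).ne'
  have hcnetop : c ≠ ⊤ := ENNReal.ofReal_ne_top
  have hc0 : c ^ (α/2) ≠ 0 :=
    (ENNReal.rpow_pos (lt_of_le_of_ne zero_le (Ne.symm hcne0)) hcnetop).ne'
  have hctop : c ^ (α/2) ≠ ⊤ := ENNReal.rpow_ne_top_of_nonneg (by positivity) hcnetop
  have hgoal : ENNReal.ofReal ((2 : ℝ) ^ (-α / 2) * M ^ (α / 2 + 2) * Φ ^ (-α / 2))
      = ENNReal.ofReal 2 ^ (-α / 2) * a ^ (α / 2 + 2) * b ^ (-α / 2) := by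
    rw [ENNReal.ofReal_mul (by positivity), ENNReal.ofReal_mul (by positivity)]
    rw [← ENNReal.ofReal_rpow_of_pos (by norm_num : (0:ℝ) < 2),
      ← ENNReal.ofReal_rpow_of_pos hMpos, ← ENNReal.ofReal_rpow_of_pos hΦpos]
  have hmulk : ENNReal.ofReal 2 ^ (-α / 2) * a ^ (α / 2 + 2) * b ^ (-α / 2) * c ^ (α/2)
      = a ^ (α + 2) := by
    rw [hck]
    calc ENNReal.ofReal 2 ^ (-α / 2) * a ^ (α / 2 + 2) * b ^ (-α / 2)
          * (ENNReal.ofReal 2 ^ (α/2) * a ^ (α/2) * b ^ (α/2))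
        = (ENNReal.ofReal 2 ^ (-α / 2) * ENNReal.ofReal 2 ^ (α/2))
          * (a ^ (α / 2 + 2) * a ^ (α/2)) * (b ^ (-α / 2) * b ^ (α/2)) := by ring
      _ = ENNReal.ofReal 2 ^ (-α / 2 + α/2) * a ^ (α / 2 + 2 + α/2) * b ^ (-α / 2 + α/2) := by
          rw [← ENNReal.rpow_add _ _ h20 h2top, ← ENNReal.rpow_add _ _ ha0 hatop,
            ← ENNReal.rpow_add _ _ hb0 hbtop]
      _ = a ^ (α + 2) := by
          rw [show -α / 2 + α/2 = 0 by ring]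
          rw [ENNReal.rpow_zero, ENNReal.rpow_zero, one_mul, mul_one]
          congr 1
          ring
  rw [hgoal, ← ENNReal.mul_le_mul_iff_left hc0 hctop, hmulk]
  exact key2
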